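/- Let [b_1,...,b_ℓ] be a T-string and let (a_1,...,a_ℓ) be the unique rational solution of the linear system b_j − 2 = a_{j−1} − a_j b_j + a_{j+1} for all j (with the conventions a_0 = a_{ℓ+1} = 0). Then a_1 + a_ℓ = −1. -/

import Mathlib

/-- The operation `L[b₁,…,b_ℓ] = [2, b₁, …, b_{ℓ-1}, b_ℓ + 1]`. -/
def Lop (l : List ℤ) : List ℤ := 2 :: (l.dropLast ++ [l.getLast! + 1])

/-- The operation `R[b₁,…,b_ℓ] = [b₁+1, b₂, …, b_ℓ, 2]`. -/
def Rop : List ℤ → List ℤ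
  | [] => []
  | a :: t => (a + 1) :: (t ++ [2])

/-- T-strings: generated from `[4]` by the operations `L` and `R`. -/
inductive TString : List ℤ → Prop
  | base : TString [4]
  | left {l : List ℤ} : TString l → TString (Lop l)
  | right {l : List ℤ} : TString l → TString (Rop l)

/-!
With `xⱼ = 1 + aⱼ` the system becomes the homogeneous recurrence `x_{j+1} = bⱼ xⱼ - x_{j-1}`
with boundary values `x₀ = x_{ℓ+1} = 1`, so `(x_{ℓ+1}, x_ℓ) = M (x₁, x₀)` for the transfer
matrix `M = M_{b_ℓ} ⋯ M_{b₁}`, `M_b = !![b, -1; 1, 0]`. Writing `M = !![A, B; C, D]` and using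
`det M = 1`, one finds `A (x₁ + x_ℓ - 1) = 2 - (A + B - C)`.

The quantity `A + B - C = trace (K * M)`, `K = !![1, -1; 1, 0]`, is an invariant of T-strings:
since `M_{b+1} = U M_b = M_b V` with `U = !![1, 1; 0, 1]`, `V = !![1, 0; -1, 1]`, the operations
`L` and `R` act by `M ↦ U M M₂` and `M ↦ M₂ M V`, and `M₂ K U = V K M₂ = K`. It equals `2` for
`[4]`. Finally `A > 0` because all `bⱼ ≥ 2`: the first column of `M` grows strictly along the chain.
-/

open Matrix

theorem Lop_concat (t : List ℤ) (c : ℤ) : Lop (t ++ [c]) = 2 :: (t ++ [c + 1]) := by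
  simp [Lop]

section ChainMatrix

variable (R : Type*) [CommRing R]

def stepMatrix (b : ℤ) : Matrix (Fin 2) (Fin 2) R := !![(b : R), -1; 1, 0]

def chainMatrix : List ℤ → Matrix (Fin 2) (Fin 2) R
  | [] => 1
  | b :: t => chainMatrix t * stepMatrix R b

variable {R}

theorem det_stepMatrix (b : ℤ) : (stepMatrix R b).det = 1 := by
  simp [stepMatrix, det_fin_two]

theorem det_chainMatrix (l : List ℤ) : (chainMatrix R l).det = 1 := by
  induction l with
  | nil => simp [chainMatrix]
  | cons b t ih => simp [chainMatrix, det_mul, ih, det_stepMatrix]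

theorem chainMatrix_append_singleton (l : List ℤ) (b : ℤ) :
    chainMatrix R (l ++ [b]) = stepMatrix R b * chainMatrix R l := by
  induction l with
  | nil => simp [chainMatrix]
  | cons c t ih => simp [chainMatrix, ih, Matrix.mul_assoc]

theorem stepMatrix_add_one_eq_mul_left (b : ℤ) :
    stepMatrix R (b + 1) = !![1, 1; 0, 1] * stepMatrix R b := by
  simp [stepMatrix]

theorem stepMatrix_add_one_eq_mul_right (b : ℤ) :
    stepMatrix R (b + 1) = stepMatrix R b * !![1, 0; -1, 1] := by
  simp [stepMatrix]

theorem chainMatrix_mulVec (l : List ℤ) (x : ℕ → R)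
    (hx : ∀ j, 1 ≤ j → j ≤ l.length → x (j + 1) = (l.getD (j - 1) 0 : R) * x j - x (j - 1)) :
    chainMatrix R l *ᵥ ![x 1, x 0] = ![x (l.length + 1), x l.length] := by
  induction l generalizing x with
  | nil => simp [chainMatrix]
  | cons b t ih =>
    have hstep : stepMatrix R b *ᵥ ![x 1, x 0] = ![x 2, x 1] := by
      have h2 : x 2 = b * x 1 - x 0 := by simpa using hx 1 le_rfl (by simp)
      ext i
      fin_cases i <;> simp [stepMatrix, h2, sub_eq_add_neg, mul_comm]
    rw [chainMatrix, ← mulVec_mulVec, hstep]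
    refine ih (fun j => x (j + 1)) fun j hj1 hj2 => ?_
    obtain ⟨k, rfl⟩ := Nat.exists_eq_add_of_le' hj1
    simpa using hx (k + 2) (by omega) (by simp; omega)

theorem chainMatrix_Lop (t : List ℤ) (c : ℤ) :
    chainMatrix R (Lop (t ++ [c])) =
      !![1, 1; 0, 1] * chainMatrix R (t ++ [c]) * stepMatrix R 2 := by
  simp only [Lop_concat, chainMatrix, chainMatrix_append_singleton, stepMatrix_add_one_eq_mul_left,
    Matrix.mul_assoc]

theorem chainMatrix_Rop (b : ℤ) (t : List ℤ) :
    chainMatrix R (Rop (b :: t)) = stepMatrix R 2 * chainMatrix R (b :: t) * !![1, 0; -1, 1] := by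
  simp only [Rop, chainMatrix, chainMatrix_append_singleton, stepMatrix_add_one_eq_mul_right,
    Matrix.mul_assoc]

theorem trace_mul_chainMatrix_Lop (t : List ℤ) (c : ℤ) :
    trace (!![1, -1; 1, 0] * chainMatrix R (Lop (t ++ [c]))) =
      trace (!![1, -1; 1, 0] * chainMatrix R (t ++ [c])) := by
  have hK : stepMatrix R 2 * !![1, -1; 1, 0] * !![1, 1; 0, 1] = !![1, -1; 1, 0] := by
    norm_num [stepMatrix]
  rw [chainMatrix_Lop, ← Matrix.mul_assoc, ← Matrix.mul_assoc, trace_mul_comm,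
    ← Matrix.mul_assoc, ← Matrix.mul_assoc, hK]

theorem trace_mul_chainMatrix_Rop (b : ℤ) (t : List ℤ) :
    trace (!![1, -1; 1, 0] * chainMatrix R (Rop (b :: t))) =
      trace (!![1, -1; 1, 0] * chainMatrix R (b :: t)) := by
  have hK : !![1, 0; -1, 1] * !![1, -1; 1, 0] * stepMatrix R 2 = !![1, -1; 1, 0] := by
    norm_num [stepMatrix]
  rw [chainMatrix_Rop, ← Matrix.mul_assoc, ← Matrix.mul_assoc, trace_mul_comm,
    ← Matrix.mul_assoc, ← Matrix.mul_assoc, hK]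

end ChainMatrix

theorem chainMatrix_one_zero_mem_Ico {R : Type*} [CommRing R] [LinearOrder R]
    [IsStrictOrderedRing R] (l : List ℤ) (hl : ∀ b ∈ l, 2 ≤ b) :
    chainMatrix R l 1 0 ∈ Set.Ico 0 (chainMatrix R l 0 0) := by
  induction l using List.reverseRecOn with
  | nil => simp [chainMatrix]
  | append_singleton t b ih =>
    obtain ⟨hC, hCA⟩ := ih fun c hc => hl c (by simp [hc])
    have hb : (2 : R) ≤ b := by exact_mod_cast hl b (by simp)
    simp only [chainMatrix_append_singleton, stepMatrix, mul_apply, Fin.sum_univ_two, of_apply,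
      cons_val', cons_val_zero, cons_val_fin_one, cons_val_one, one_mul, zero_mul, add_zero,
      neg_mul]
    constructor <;> nlinarith

theorem TString.ne_nil {l : List ℤ} (h : TString l) : l ≠ [] := by
  induction h with
  | base => simp
  | left => simp [Lop]
  | @right l _ ih => cases l with
    | nil => exact (ih rfl).elim
    | cons => simp [Rop]

theorem TString.two_le {l : List ℤ} (h : TString l) : ∀ b ∈ l, 2 ≤ b := by
  induction h with
  | base => simp
  | @left l h ih =>
    obtain ⟨t, c, rfl⟩ := (List.eq_nil_or_concat' l).resolve_left h.ne_nil
    simp only [Lop_concat, List.mem_cons, List.mem_append, List.not_mem_nil, or_false]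
    have hc := ih c (by simp)
    rintro b (rfl | hb | rfl)
    · rfl
    · exact ih b (by simp [hb])
    · omega
  | @right l h ih =>
    obtain ⟨b₀, t, rfl⟩ := List.exists_cons_of_ne_nil h.ne_nil
    simp only [Rop, List.mem_cons, List.mem_append, List.not_mem_nil, or_false]
    have hb₀ := ih b₀ (by simp)
    rintro b (rfl | hb | rfl)
    · omega
    · exact ih b (by simp [hb])
    · rfl

theorem TString.trace_mul_chainMatrix {R : Type*} [CommRing R] {l : List ℤ} (h : TString l) :
    trace (!![1, -1; 1, 0] * chainMatrix R l) = 2 := by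
  induction h with
  | base => norm_num [chainMatrix, stepMatrix]
  | @left l h ih =>
    obtain ⟨t, c, rfl⟩ := (List.eq_nil_or_concat' l).resolve_left h.ne_nil
    rwa [trace_mul_chainMatrix_Lop]
  | @right l h ih =>
    obtain ⟨b, t, rfl⟩ := List.exists_cons_of_ne_nil h.ne_nil
    rwa [trace_mul_chainMatrix_Rop]

/-- Let `[b₁,…,b_ℓ]` be a T-string and `(a₁,…,a_ℓ)` the (discrepancy) solution
of the linear system `bⱼ - 2 = a_{j-1} - aⱼ bⱼ + a_{j+1}` for `1 ≤ j ≤ ℓ`,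
with the conventions `a₀ = a_{ℓ+1} = 0`.  Then `a₁ + a_ℓ = -1`.
Here `bⱼ = l.getD (j-1) 0` (lists are 0-indexed). -/
theorem discrepancy_ends (l : List ℤ) (h : TString l) (a : ℕ → ℚ)
    (ha0 : a 0 = 0) (haend : a (l.length + 1) = 0)
    (hsys : ∀ j : ℕ, 1 ≤ j → j ≤ l.length →
      ((l.getD (j - 1) 0 : ℤ) : ℚ) - 2 =
        a (j - 1) - a j * ((l.getD (j - 1) 0 : ℤ) : ℚ) + a (j + 1)) :
    a 1 + a l.length = -1 := by
  have hx := chainMatrix_mulVec l (fun j => 1 + a j) fun j hj1 hj2 => by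
    linear_combination -hsys j hj1 hj2
  have hdet := det_chainMatrix (R := ℚ) l
  have htrace := h.trace_mul_chainMatrix (R := ℚ)
  obtain ⟨hC, hCA⟩ := chainMatrix_one_zero_mem_Ico (R := ℚ) l h.two_le
  set M := chainMatrix ℚ l
  have hfirst : M 0 0 * (1 + a 1) + M 0 1 = 1 := by
    simpa [mulVec, dotProduct, ha0, haend] using congrFun hx 0
  have hlast : M 1 0 * (1 + a 1) + M 1 1 = 1 + a l.length := by
    simpa [mulVec, dotProduct, ha0] using congrFun hx 1
  rw [det_fin_two] at hdet
  rw [eta_fin_two M, mul_fin_two, trace_fin_two_of] at htrace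
  apply mul_left_cancel₀ (hC.trans_lt hCA).ne'
  linear_combination (1 + M 1 0) * hfirst - M 0 0 * hlast + hdet - htrace
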